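/- Let m ≥ 2 be a natural number, f : Fin m → ℤ, T = Σ_i f i, and suppose the rational average q = T/m is not an integer, so that ⌈q⌉ = ⌊q⌋ + 1; write L = ⌊q⌋. Define Y(f) = Σ_i (max(f i − (L+1), 0) + max(L − f i, 0)) and suppose Y(f) > 0. Then there exist distinct indices i, j such that the function f' obtained from f by replacing f i and f j with their near-averages ⌈(f i + f j)/2⌉ and ⌊(f i + f j)/2⌋ satisfies Σ f' = T and Y(f') ≤ Y(f) − 1. (One meeting of a suitable pair of tokens strictly decreases the Lyapunov function Y.) -/

import Mathlib

/-!
Write `lyapTerm L x` for the distance from `x` to the interval `[L, L + 1]`, so that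
`Y f = ∑ k, lyapTerm L (f k)`. Since the average `T / m` lies strictly between `L` and `L + 1`,
some token exceeds `L` and some token is at most `L`. A token outside `[L, L + 1]`, which exists
because `Y f > 0`, can therefore be paired with a token on the other side of the gap so that the
two differ by at least `2`. Their near-averages keep the sum and lie strictly between them; as
`lyapTerm L` is convex with slopes `-1, 0, 1`, this lowers the pair's contribution by at least `1`.
-/

open Finset Function

def lyapTerm (L x : ℤ) : ℤ := max (x - (L + 1)) 0 + max (L - x) 0

lemma lyapTerm_pos_iff {L x : ℤ} : 0 < lyapTerm L x ↔ x < L ∨ L + 1 < x := by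
  simp only [lyapTerm, max_def]
  split_ifs <;> omega

lemma lyapTerm_add_lt {L a b c d : ℤ} (hb : b ≤ L) (ha : L < a) (hc : b < c) (hd : b < d)
    (hsum : c + d = a + b) : lyapTerm L c + lyapTerm L d < lyapTerm L a + lyapTerm L b := by
  simp only [lyapTerm, max_def]
  split_ifs <;> omega

lemma Rat.floor_add_div_two (a b : ℤ) : ⌊((a : ℚ) + b) / 2⌋ = (a + b) / 2 := by
  exact_mod_cast Rat.floor_intCast_div_natCast (a + b) 2

lemma Rat.ceil_add_div_two (a b : ℤ) : ⌈((a : ℚ) + b) / 2⌉ = (a + b + 1) / 2 := by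
  have := Rat.ceil_intCast_div_natCast (a + b) 2
  push_cast at this
  rw [this]
  omega

lemma Int.mul_floor_div_lt_of_not_isInt {K : Type*} [Field K] [LinearOrder K]
    [IsStrictOrderedRing K] [FloorRing K] {m : ℕ} {T : ℤ} (h : ¬ ∃ z : ℤ, (T : K) / m = z) :
    m * ⌊(T : K) / m⌋ < T ∧ T < m * (⌊(T : K) / m⌋ + 1) := by
  have hm : (0 : K) < m := by
    rcases Nat.eq_zero_or_pos m with rfl | hm
    · exact (h ⟨0, by simp⟩).elim
    · exact_mod_cast hm
  have hlt : (⌊(T : K) / m⌋ : K) < T / m :=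
    Int.floor_lt_self_iff.mpr fun ⟨z, hz⟩ => h ⟨z, hz.symm⟩
  have hgt : (T : K) / m < ⌊(T : K) / m⌋ + 1 := Int.lt_floor_add_one _
  constructor
  · exact_mod_cast (lt_div_iff₀' hm).mp hlt
  · exact_mod_cast (div_lt_iff₀' hm).mp hgt

section Update

variable {ι α M : Type*} [Fintype ι] [DecidableEq ι] [AddCommMonoid M]

lemma Fintype.sum_update_add_self (g : ι → M) (j : ι) (x : M) :
    ∑ k, update g j x k + g j = ∑ k, g k + x := by
  rw [sum_update_of_mem (mem_univ j), ← erase_eq, ← add_sum_erase _ _ (mem_univ j)]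
  abel

lemma Fintype.sum_comp_update_update {i j : ι} (hij : i ≠ j) (h : α → M) (f : ι → α) (a b : α) :
    ∑ k, h (update (update f i a) j b k) + (h (f i) + h (f j)) = ∑ k, h (f k) + (h a + h b) := by
  have hj := Fintype.sum_update_add_self (h ∘ update f i a) j (h b)
  have hi := Fintype.sum_update_add_self (h ∘ f) i (h a)
  simp only [← comp_update, comp_apply, update_of_ne hij.symm] at hj hi
  calc ∑ k, h (update (update f i a) j b k) + (h (f i) + h (f j))
      = (∑ k, h (update (update f i a) j b k) + h (f j)) + h (f i) := by abel
    _ = (∑ k, h (update f i a k) + h (f i)) + h b := by rw [hj, add_right_comm]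
    _ = ∑ k, h (f k) + (h a + h b) := by rw [hi, add_assoc]

end Update

def meet {ι : Type*} [DecidableEq ι] (f : ι → ℤ) (i j : ι) : ι → ℤ :=
  update (update f i ⌈((f i : ℚ) + (f j : ℚ)) / 2⌉) j ⌊((f i : ℚ) + (f j : ℚ)) / 2⌋

section Meet

variable {ι : Type*} [Fintype ι] [DecidableEq ι] {f : ι → ℤ} {i j : ι}

lemma sum_meet (hij : i ≠ j) : ∑ k, meet f i j k = ∑ k, f k := by
  have h := Fintype.sum_comp_update_update hij id f ⌈((f i : ℚ) + (f j : ℚ)) / 2⌉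
    ⌊((f i : ℚ) + (f j : ℚ)) / 2⌋
  rw [meet]
  simp only [id, Rat.ceil_add_div_two, Rat.floor_add_div_two] at h ⊢
  omega

lemma sum_lyapTerm_meet_lt {L : ℤ} (hij : i ≠ j) (hj : f j ≤ L) (hi : L < f i)
    (hgap : f j + 2 ≤ f i) : ∑ k, lyapTerm L (meet f i j k) < ∑ k, lyapTerm L (f k) := by
  have h := Fintype.sum_comp_update_update hij (lyapTerm L) f ⌈((f i : ℚ) + (f j : ℚ)) / 2⌉
    ⌊((f i : ℚ) + (f j : ℚ)) / 2⌋
  have := lyapTerm_add_lt hj hi (c := (f i + f j + 1) / 2) (d := (f i + f j) / 2)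
    (by omega) (by omega) (by omega)
  rw [meet]
  simp only [Rat.ceil_add_div_two, Rat.floor_add_div_two] at h ⊢
  linarith

end Meet

lemma exists_meeting_pair {ι : Type*} [Fintype ι] {f : ι → ℤ} {L : ℤ}
    (hlow : Fintype.card ι * L < ∑ k, f k) (hhigh : ∑ k, f k < Fintype.card ι * (L + 1))
    (hpos : 0 < ∑ k, lyapTerm L (f k)) : ∃ i j, f j ≤ L ∧ L < f i ∧ f j + 2 ≤ f i := by
  obtain ⟨i, -, hi⟩ := exists_lt_of_sum_lt (s := univ) (f := fun _ => L) (g := f)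
    (by simpa [card_univ] using hlow)
  obtain ⟨j, -, hj⟩ := exists_lt_of_sum_lt (s := univ) (f := f) (g := fun _ => L + 1)
    (by simpa [card_univ] using hhigh)
  obtain ⟨k, -, hk⟩ := exists_lt_of_sum_lt (s := univ) (f := fun _ => 0)
    (g := fun k => lyapTerm L (f k)) (by simpa using hpos)
  rcases lyapTerm_pos_iff.mp hk with hk | hk
  · exact ⟨i, k, by omega, hi, by omega⟩
  · exact ⟨k, j, by omega, by omega, by omega⟩

theorem stmt_14_general (m : ℕ) (f : Fin m → ℤ) (T : ℤ) (hT : T = ∑ i, f i)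
    (hnotint : ¬ ∃ z : ℤ, (T : ℚ) / (m : ℚ) = (z : ℚ))
    (L : ℤ) (hL : L = ⌊(T : ℚ) / (m : ℚ)⌋)
    (Y : (Fin m → ℤ) → ℤ)
    (hY : ∀ g : Fin m → ℤ, Y g = ∑ i, (max (g i - (L + 1)) 0 + max (L - g i) 0))
    (hpos : 0 < Y f) :
    ∃ i j : Fin m, i ≠ j ∧
      (∑ k, (Function.update (Function.update f i ⌈((f i : ℚ) + (f j : ℚ)) / 2⌉) j
          ⌊((f i : ℚ) + (f j : ℚ)) / 2⌋) k) = T ∧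
      Y (Function.update (Function.update f i ⌈((f i : ℚ) + (f j : ℚ)) / 2⌉) j
          ⌊((f i : ℚ) + (f j : ℚ)) / 2⌋) ≤ Y f - 1 := by
  obtain ⟨hlow, hhigh⟩ := Int.mul_floor_div_lt_of_not_isInt hnotint
  rw [← hL, hT] at hlow hhigh
  rw [hY] at hpos
  obtain ⟨i, j, hj, hi, hgap⟩ :=
    exists_meeting_pair (L := L) (by simpa using hlow) (by simpa using hhigh) hpos
  have hij : i ≠ j := by rintro rfl; omega
  refine ⟨i, j, hij, hT ▸ sum_meet hij, ?_⟩
  rw [hY, hY]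
  exact Int.le_sub_one_of_lt (sum_lyapTerm_meet_lt hij hj hi hgap)

/-- One meeting of a suitable pair of tokens strictly decreases the Lyapunov function `Y`
(non-integer average case). -/
theorem stmt_14 (m : ℕ) (hm : 2 ≤ m) (f : Fin m → ℤ) (T : ℤ) (hT : T = ∑ i, f i)
    (hnotint : ¬ ∃ z : ℤ, (T : ℚ) / (m : ℚ) = (z : ℚ))
    (L : ℤ) (hL : L = ⌊(T : ℚ) / (m : ℚ)⌋)
    (Y : (Fin m → ℤ) → ℤ)
    (hY : ∀ g : Fin m → ℤ, Y g = ∑ i, (max (g i - (L + 1)) 0 + max (L - g i) 0))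
    (hpos : 0 < Y f) :
    ∃ i j : Fin m, i ≠ j ∧
      (∑ k, (Function.update (Function.update f i ⌈((f i : ℚ) + (f j : ℚ)) / 2⌉) j
          ⌊((f i : ℚ) + (f j : ℚ)) / 2⌋) k) = T ∧
      Y (Function.update (Function.update f i ⌈((f i : ℚ) + (f j : ℚ)) / 2⌉) j
          ⌊((f i : ℚ) + (f j : ℚ)) / 2⌋) ≤ Y f - 1 :=
  stmt_14_general m f T hT hnotint L hL Y hY hpos
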